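/- Let R be an integral domain, G a finite group, and φ : G → R^× a group homomorphism with kernel N. Then R_φ is a direct summand of a permutation RG-module if and only if the index [G:N] is a unit in R. -/

import Mathlib

/-- The ideal `I^φ_H = {r ∈ R : (1 - φ(h))·r = 0 for all h ∈ H}`, the annihilator of
`{1 - φ(h) : h ∈ H}`. -/
def Iphi {R : Type*} [CommRing R] {G : Type*} [Group G] (φ : G →* Rˣ) (H : Subgroup G) :
    Ideal R where
  carrier := {r : R | ∀ h ∈ H, (1 - ((φ h : Rˣ) : R)) * r = 0}
  add_mem' := by
    intro a b ha hb h hh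
    rw [mul_add, ha h hh, hb h hh, add_zero]
  zero_mem' := by intro h hh; rw [mul_zero]
  smul_mem' := by
    intro c r hr h hh
    simp only [smul_eq_mul]
    rw [mul_comm c r, ← mul_assoc, hr h hh, zero_mul]

/-- `R_φ` is a direct summand of a permutation `RG`-module: there are finitely many
subgroups `H i` of `G`, `RG`-module maps `f i : R_φ → R(G/H i)` (encoded by the images
`x i` of `1 ∈ R_φ`, which must be `φ`-semi-invariant) and `RG`-module maps
`g i : R(G/H i) → R_φ` (i.e. `R`-linear maps satisfying `g (s • m) = φ(s)·g m`) whose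
composite `∑ i, g i ∘ f i` is the identity of `R_φ`. -/
def IsPermSummand (R : Type*) [CommRing R] (G : Type*) [Group G] (φ : G →* Rˣ) : Prop :=
  ∃ (n : ℕ) (Hs : Fin n → Subgroup G)
    (x : ∀ i, MonoidAlgebra R (G ⧸ Hs i))
    (g : ∀ i, (MonoidAlgebra R (G ⧸ Hs i)) →ₗ[R] R),
    (∀ i (s : G), (Representation.ofMulAction R G (G ⧸ Hs i)) s (x i) = ((φ s : Rˣ) : R) • x i) ∧
    (∀ i (s : G) (m : MonoidAlgebra R (G ⧸ Hs i)),
      g i ((Representation.ofMulAction R G (G ⧸ Hs i)) s m) = ((φ s : Rˣ) : R) * g i m) ∧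
    (∑ i, g i (x i)) = 1


/-!
A `φ`-equivariant functional `g` on `R[G/H]` is determined by `a = g(H)`, and a
`φ`-semi-invariant `x` by its coefficient `b` at the trivial coset, with `g x = [G:H] b a`.
If `H ≰ ker φ`, some `h ∈ H` with `φ h ≠ 1` fixes the trivial coset, so `a = φ(h) a` forces
`a = 0` in a domain; otherwise `[G:N]` divides `[G:H]`. Hence `[G:N]` divides `1 = ∑ gᵢ xᵢ`.
Conversely, with `ψ : G/N → Rˣ` induced by `φ`, the element `∑ ψ(c)⁻¹ c` of `R[G/N]` and the
functional `c ↦ ψ(c)` pair to `[G:N]`.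
-/

open MonoidAlgebra

section SemiInvariance

variable {R G X : Type*} [CommRing R] [Group G] [MulAction G X]

def IsSemiInvariant (φ : G →* Rˣ) (x : MonoidAlgebra R X) : Prop :=
  ∀ s : G, Representation.ofMulAction R G X s x = ((φ s : Rˣ) : R) • x

def IsEquivariant (φ : G →* Rˣ) (g : MonoidAlgebra R X →ₗ[R] R) : Prop :=
  ∀ (s : G) (m : MonoidAlgebra R X),
    g (Representation.ofMulAction R G X s m) = ((φ s : Rˣ) : R) * g m

variable {φ : G →* Rˣ}

theorem IsSemiInvariant.mul_coeff_smul {x : MonoidAlgebra R X} (hx : IsSemiInvariant φ x)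
    (s : G) (y : X) : (φ s : R) * x.coeff (s • y) = x.coeff y := by
  have := congr($(hx s).coeff (s • y))
  rwa [Representation.coeff_ofMulAction, inv_smul_smul, coeff_smul_apply, smul_eq_mul,
    eq_comm] at this

theorem IsEquivariant.apply_single_smul {g : MonoidAlgebra R X →ₗ[R] R}
    (hg : IsEquivariant φ g) (s : G) (y : X) :
    g (single (s • y) 1) = (φ s : R) * g (single y 1) := by
  rw [← Representation.ofMulAction_single, hg]

theorem IsEquivariant.apply_single_eq_zero [NoZeroDivisors R] {g : MonoidAlgebra R X →ₗ[R] R}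
    (hg : IsEquivariant φ g) {s : G} {y : X} (hsy : s • y = y) (hs : φ s ≠ 1) :
    g (single y 1) = 0 := by
  have h := hg.apply_single_smul s y
  rw [hsy, ← sub_eq_zero, ← one_sub_mul, mul_eq_zero, sub_eq_zero] at h
  exact h.resolve_left fun h1 => hs (Units.ext h1.symm)

end SemiInvariance

section Quotient

variable {R G : Type*} [CommRing R] [Group G] {φ : G →* Rˣ} {H : Subgroup G}

theorem IsEquivariant.apply_eq_index_mul [H.FiniteIndex] {x : MonoidAlgebra R (G ⧸ H)}
    {g : MonoidAlgebra R (G ⧸ H) →ₗ[R] R} (hx : IsSemiInvariant φ x)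
    (hg : IsEquivariant φ g) : g x = H.index * (x.coeff ↑(1 : G) * g (single ↑(1 : G) 1)) := by
  have := Fintype.ofFinite (G ⧸ H)
  have hterm (c : G ⧸ H) :
      x.coeff c * g (single c 1) = x.coeff ↑(1 : G) * g (single ↑(1 : G) 1) := by
    obtain ⟨t, rfl⟩ := QuotientGroup.mk_surjective c
    have hc : (t : G ⧸ H) = t • ↑(1 : G) := by simp
    rw [hc, hg.apply_single_smul, ← hx.mul_coeff_smul t ↑(1 : G)]
    ring
  calc g x = ∑ c : G ⧸ H, x.coeff c * g (single c 1) := by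
        conv_lhs => rw [← (MonoidAlgebra.basis (G ⧸ H) R).sum_equivFun x]
        simp only [map_sum, map_smul, Module.Basis.equivFun_apply, basis_apply, smul_eq_mul]
        rfl
    _ = _ := by
        rw [Finset.sum_congr rfl fun c _ => hterm c, Finset.sum_const, nsmul_eq_mul,
          Finset.card_univ, Subgroup.index_eq_card, Nat.card_eq_fintype_card]

theorem IsEquivariant.index_ker_dvd_apply [NoZeroDivisors R] [H.FiniteIndex]
    {x : MonoidAlgebra R (G ⧸ H)} {g : MonoidAlgebra R (G ⧸ H) →ₗ[R] R}
    (hx : IsSemiInvariant φ x) (hg : IsEquivariant φ g) : (φ.ker.index : R) ∣ g x := by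
  rw [hg.apply_eq_index_mul hx]
  by_cases hHN : H ≤ φ.ker
  · exact (Nat.cast_dvd_cast (Subgroup.index_dvd_of_le hHN)).mul_right _
  · obtain ⟨h, hhH, hhN⟩ := SetLike.not_le_iff_exists.mp hHN
    have hfix : h • ((1 : G) : G ⧸ H) = ↑(1 : G) := by
      rwa [← MulAction.mem_stabilizer_iff, MulAction.stabilizer_quotient]
    rw [hg.apply_single_eq_zero hfix hhN, mul_zero, mul_zero]
    exact dvd_zero _

end Quotient

theorem IsPermSummand.isUnit_index_ker {R G : Type*} [CommRing R] [NoZeroDivisors R] [Group G]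
    [Finite G] {φ : G →* Rˣ} (h : IsPermSummand R G φ) : IsUnit (φ.ker.index : R) := by
  obtain ⟨n, Hs, x, g, hx, hg, hsum⟩ := h
  refine isUnit_of_dvd_one ?_
  rw [← hsum]
  exact Finset.dvd_sum fun i _ => IsEquivariant.index_ker_dvd_apply (hx i) (hg i)

section TwistedNorm

variable {R G : Type*} [CommRing R] [Group G] (φ : G →* Rˣ)

theorem QuotientGroup.kerLift_smul (s : G) (c : G ⧸ φ.ker) :
    QuotientGroup.kerLift φ (s • c) = φ s * QuotientGroup.kerLift φ c := by
  induction c using QuotientGroup.induction_on with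
  | H t => rw [MulAction.Quotient.smul_mk, smul_eq_mul, QuotientGroup.kerLift_mk,
      QuotientGroup.kerLift_mk, map_mul]

noncomputable def twistedNorm [Fintype (G ⧸ φ.ker)] : MonoidAlgebra R (G ⧸ φ.ker) :=
  ∑ c, single c ((QuotientGroup.kerLift φ c)⁻¹ : Rˣ)

noncomputable def twistedAugmentation : MonoidAlgebra R (G ⧸ φ.ker) →ₗ[R] R :=
  (MonoidAlgebra.basis (G ⧸ φ.ker) R).constr R fun c => (QuotientGroup.kerLift φ c : R)

theorem twistedAugmentation_single (c : G ⧸ φ.ker) (r : R) :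
    twistedAugmentation φ (single c r) = r * QuotientGroup.kerLift φ c := by
  have hc : single c r = r • MonoidAlgebra.basis (G ⧸ φ.ker) R c := by
    rw [basis_apply, smul_single, smul_eq_mul, mul_one]
  rw [hc, map_smul, twistedAugmentation, Module.Basis.constr_basis, smul_eq_mul]

theorem isSemiInvariant_twistedNorm [Fintype (G ⧸ φ.ker)] :
    IsSemiInvariant φ (twistedNorm (R := R) φ) := by
  intro s
  rw [twistedNorm, map_sum, Finset.smul_sum]
  refine Fintype.sum_equiv (MulAction.toPerm s) _ _ fun c => ?_
  rw [Representation.ofMulAction_single, MulAction.toPerm_apply, smul_single, smul_eq_mul,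
    QuotientGroup.kerLift_smul, ← Units.val_mul, mul_inv, mul_inv_cancel_left]

theorem isEquivariant_twistedAugmentation :
    IsEquivariant φ (twistedAugmentation (R := R) φ) := by
  intro s m
  suffices h : twistedAugmentation φ ∘ₗ Representation.ofMulAction R G (G ⧸ φ.ker) s =
      ((φ s : Rˣ) : R) • twistedAugmentation φ from LinearMap.congr_fun h m
  refine (MonoidAlgebra.basis (G ⧸ φ.ker) R).ext fun c => ?_
  rw [LinearMap.comp_apply, LinearMap.smul_apply, basis_apply, Representation.ofMulAction_single,
    twistedAugmentation_single, twistedAugmentation_single, QuotientGroup.kerLift_smul,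
    Units.val_mul, smul_eq_mul]
  ring

theorem twistedAugmentation_twistedNorm [Fintype (G ⧸ φ.ker)] :
    twistedAugmentation φ (twistedNorm (R := R) φ) = φ.ker.index := by
  simp only [twistedNorm, map_sum, twistedAugmentation_single, Units.inv_mul, Finset.sum_const,
    Finset.card_univ, nsmul_eq_mul, mul_one, Subgroup.index_eq_card, Nat.card_eq_fintype_card]

end TwistedNorm

theorem isPermSummand_of_isUnit_index_ker {R G : Type*} [CommRing R] [Group G] {φ : G →* Rˣ}
    [φ.ker.FiniteIndex] (hu : IsUnit (φ.ker.index : R)) : IsPermSummand R G φ := by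
  have := Fintype.ofFinite (G ⧸ φ.ker)
  refine ⟨1, fun _ => φ.ker, fun _ => hu.unit⁻¹.val • twistedNorm φ,
    fun _ => twistedAugmentation φ, fun _ s => ?_,
    fun _ => isEquivariant_twistedAugmentation φ, ?_⟩
  · rw [map_smul, isSemiInvariant_twistedNorm φ s, smul_comm]
  · rw [Fin.sum_univ_one, map_smul, twistedAugmentation_twistedNorm, smul_eq_mul,
      IsUnit.val_inv_mul]

/-- over an integral domain `R`, `R_φ` is a direct summand of a permutation
`RG`-module if and only if the index of `N = ker φ` in `G` is a unit in `R`. -/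
theorem stmt6 (R : Type*) [CommRing R] [IsDomain R] (G : Type*) [Group G] [Finite G]
    (φ : G →* Rˣ) :
    IsPermSummand R G φ ↔ IsUnit (((φ.ker.index : ℕ) : R)) :=
  ⟨IsPermSummand.isUnit_index_ker, isPermSummand_of_isUnit_index_ker⟩
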